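/- Let G = A ⋊ ⟨t⟩ be finitely generated with A abelian and ⟨t⟩ ≅ ℤ. Then A has density dens_S(A) = 0 in G with respect to any finite generating set of the form S = S₀ ∪ {t} with S₀ ⊆ A. -/

import Mathlib

/-!
Write `g ∈ A` of word length `≤ n` as a product of conjugates `t ^ e * s * t ^ (-e)`, `s ∈ S₀`,
whose heights `e` range over an interval `[m, M] ∋ 0` that the word has to sweep, so that
`#letters + 2 (M - m) ≤ n`. Fix `w`. If `M - m ≥ w`, the `w + 1` elements `g * t ^ j`,
`j ∈ [m, m + w]`, lie in the same ball, and they are distinct for distinct `g` because `t` has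
infinite order and `A ∩ ⟨t⟩ = 1`: such `g` fill at most a `1 / (w + 1)` fraction of the ball.
Otherwise `g` is a word of length `≤ n` in the finitely many letters `t ^ e * s * t ^ (-e)`,
`|e| ≤ w`. These commute, so such a word is `u ^ 2 * c` with `u` of length `≤ n / 2` and `c` of
bounded length, and there are at most `C_w` times as many of them as of length `≤ n / 2`. Each
`u` of length `≤ n / 2` gives `J + 1` distinct elements `u * t ^ i`, `i ≤ J`, of the ball of radius
`n` once `n / 2 + 4 w + J ≤ n`. So the density is eventually at most `1 / (w + 1) + C_w / (J + 1)`.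
-/

open Filter

/-- The ball of radius `n` with respect to the (symmetrized) set `S`. -/
def ball {G : Type*} [Group G] (S : Set G) (n : ℕ) : Set G :=
  {g | ∃ w : List G, w.length ≤ n ∧ (∀ x ∈ w, x ∈ S ∨ x⁻¹ ∈ S) ∧ w.prod = g}

open Set

section Ball

variable {G H : Type*} [Group G] [Group H] {S : Set G} {m n : ℕ} {g h x : G}

theorem prod_mem_ball {l : List G} (hl : ∀ x ∈ l, x ∈ S ∪ S⁻¹) : l.prod ∈ ball S l.length :=
  ⟨l, le_rfl, hl, rfl⟩

theorem prod_map_snd_mem_ball {α : Type*} {L : List (α × G)} (hL : ∀ p ∈ L, p.2 ∈ S ∪ S⁻¹) :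
    (L.map Prod.snd).prod ∈ ball S L.length := by
  simpa using prod_mem_ball (l := L.map Prod.snd) fun x hx => by
    obtain ⟨p, hp, rfl⟩ := List.mem_map.1 hx
    exact hL p hp

theorem one_mem_ball (S : Set G) (n : ℕ) : (1 : G) ∈ ball S n :=
  ⟨[], by simp⟩

theorem ball_mono (S : Set G) (h : m ≤ n) : ball S m ⊆ ball S n := by
  rintro g ⟨l, hl, hlS, rfl⟩
  exact ⟨l, hl.trans h, hlS, rfl⟩

theorem mem_ball_one (hx : x ∈ S ∪ S⁻¹) : x ∈ ball S 1 :=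
  ⟨[x], by simp, by simpa using hx, by simp⟩

theorem mul_mem_ball (hg : g ∈ ball S m) (hh : h ∈ ball S n) : g * h ∈ ball S (m + n) := by
  obtain ⟨l, hl, hlS, rfl⟩ := hg
  obtain ⟨l', hl', hlS', rfl⟩ := hh
  refine ⟨l ++ l', by simpa using add_le_add hl hl', ?_, List.prod_append⟩
  simpa only [List.mem_append, or_imp, forall_and] using ⟨hlS, hlS'⟩

theorem inv_mem_ball (hg : g ∈ ball S n) : g⁻¹ ∈ ball S n := by
  obtain ⟨l, hl, hlS, rfl⟩ := hg
  refine ⟨(l.map (·⁻¹)).reverse, by simpa using hl, fun y hy => ?_, (List.prod_inv_reverse l).symm⟩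
  obtain ⟨x, hx, rfl⟩ := List.mem_map.1 (List.mem_reverse.1 hy)
  simpa [or_comm] using hlS x hx

theorem npow_mem_ball (hx : x ∈ S ∪ S⁻¹) (k : ℕ) : x ^ k ∈ ball S k := by
  simpa using prod_mem_ball (l := List.replicate k x) (by simpa using fun _ => hx)

theorem zpow_mem_ball (hx : x ∈ S ∪ S⁻¹) (k : ℤ) : x ^ k ∈ ball S k.natAbs := by
  obtain ⟨k, rfl | rfl⟩ := k.eq_nat_or_neg
  · simpa using npow_mem_ball hx k
  · simpa using inv_mem_ball (npow_mem_ball hx k)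

theorem ball_succ_subset (S : Set G) (n : ℕ) :
    ball S (n + 1) ⊆ insert 1 (image2 (· * ·) (S ∪ S⁻¹) (ball S n)) := by
  rintro g ⟨_ | ⟨x, l⟩, hl, hlS, rfl⟩
  · simp
  · refine Or.inr ⟨x, hlS x (by simp), l.prod, ?_, rfl⟩
    exact ⟨l, by simpa using hl, fun y hy => hlS y (by simp [hy]), rfl⟩

theorem ball_finite (hS : S.Finite) (n : ℕ) : (ball S n).Finite := by
  induction n with
  | zero =>
    refine (finite_singleton 1).subset ?_
    rintro g ⟨l, hl, -, rfl⟩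
    simp [List.length_eq_zero_iff.1 (Nat.le_zero.1 hl)]
  | succ n ih => exact (((hS.union hS.inv).image2 _ ih).insert 1).subset (ball_succ_subset S n)

theorem mem_subgroup_of_mem_union_inv {A : Subgroup G} (hSA : S ⊆ A) (hx : x ∈ S ∪ S⁻¹) :
    x ∈ A := by
  rcases hx with h | h
  · exact hSA h
  · simpa using A.inv_mem (hSA h)

theorem ball_subset_subgroup {A : Subgroup G} (hSA : S ⊆ A) (n : ℕ) : ball S n ⊆ A := by
  rintro g ⟨l, -, hlS, rfl⟩
  exact list_prod_mem fun x hx => mem_subgroup_of_mem_union_inv hSA (hlS x hx)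

theorem image_ball (f : G →* H) (S : Set G) (n : ℕ) : f '' ball S n = ball (f '' S) n := by
  apply Subset.antisymm
  · rintro _ ⟨_, ⟨l, hl, hlS, rfl⟩, rfl⟩
    refine ⟨l.map f, by simpa using hl, ?_, (map_list_prod f l).symm⟩
    simp only [List.mem_map, forall_exists_index, and_imp, forall_apply_eq_imp_iff₂]
    intro x hx
    rcases hlS x hx with h | h
    · exact Or.inl (mem_image_of_mem f h)
    · exact Or.inr ⟨x⁻¹, h, map_inv f x⟩
  · rintro _ ⟨l, hl, hlS, rfl⟩
    induction l generalizing n with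
    | nil => exact ⟨1, one_mem_ball S n, by simp⟩
    | cons y l ih =>
      obtain ⟨x, hx, rfl⟩ : ∃ x, (x ∈ S ∨ x⁻¹ ∈ S) ∧ f x = y := by
        rcases hlS y (by simp) with ⟨x, hx, rfl⟩ | ⟨x, hx, hxy⟩
        · exact ⟨x, Or.inl hx, rfl⟩
        · exact ⟨x⁻¹, Or.inr (by simpa using hx), by simp [hxy]⟩
      obtain ⟨g, hg, hgl⟩ := ih l.length le_rfl fun z hz => hlS z (List.mem_cons_of_mem _ hz)
      refine ⟨x * g, ball_mono S (by simpa [add_comm] using hl)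
        (mul_mem_ball (mem_ball_one hx) hg), ?_⟩
      simp [hgl]

end Ball

section ConjProd

variable {G : Type*} [Group G]

/-- A pair `(e, x)` stands for the letter `x` placed at height `e`. -/
def conjLetter (t : G) (p : ℤ × G) : G := t ^ p.1 * p.2 * t ^ (-p.1)

def conjProd (t : G) (L : List (ℤ × G)) : G := (L.map (conjLetter t)).prod

variable {t : G} {L : List (ℤ × G)}

@[simp] theorem conjProd_nil (t : G) : conjProd t [] = 1 := rfl

@[simp] theorem conjProd_cons (t : G) (p : ℤ × G) (L : List (ℤ × G)) :
    conjProd t (p :: L) = conjLetter t p * conjProd t L := List.prod_cons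

theorem conjProd_append (t : G) (L L' : List (ℤ × G)) :
    conjProd t (L ++ L') = conjProd t L * conjProd t L' := by
  simp [conjProd]

theorem conjLetter_inv (t : G) (p : ℤ × G) : (conjLetter t p)⁻¹ = conjLetter t (p.1, p.2⁻¹) := by
  simp [conjLetter, mul_assoc]

theorem conjProd_map_shift (t : G) (d : ℤ) (L : List (ℤ × G)) :
    conjProd t (L.map fun p => (p.1 + d, p.2)) = t ^ d * conjProd t L * t ^ (-d) := by
  induction L with
  | nil => simp
  | cons p L ih =>
    simp only [List.map_cons, conjProd_cons, ih, conjLetter]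
    group

theorem conjProd_inv_map_neg (t : G) (L : List (ℤ × G)) :
    conjProd t⁻¹ (L.map fun p => (-p.1, p.2)) = conjProd t L := by
  simp only [conjProd, List.map_map]
  exact congrArg List.prod (List.map_congr_left fun p _ => by simp [conjLetter])

theorem conjProd_of_forall_fst_eq_zero (hL : ∀ p ∈ L, p.1 = 0) :
    conjProd t L = (L.map Prod.snd).prod := by
  rw [conjProd]
  congr 1
  exact List.map_congr_left fun p hp => by simp [conjLetter, hL p hp]

variable {A : Subgroup G} [A.Normal]

theorem conjLetter_mem (t : G) {p : ℤ × G} (hp : p.2 ∈ A) : conjLetter t p ∈ A := by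
  simpa [conjLetter, zpow_neg] using Subgroup.Normal.conj_mem ‹_› p.2 hp (t ^ p.1)

theorem conjProd_mem (t : G) (hL : ∀ p ∈ L, p.2 ∈ A) : conjProd t L ∈ A :=
  list_prod_mem fun _ hx => by
    obtain ⟨p, hp, rfl⟩ := List.mem_map.1 hx
    exact conjLetter_mem t (hL p hp)

theorem conjProd_eq_of_perm [IsMulCommutative A] {L' : List (ℤ × G)} (h : L.Perm L')
    (hL : ∀ p ∈ L, p.2 ∈ A) : conjProd t L = conjProd t L' := by
  refine (h.map _).prod_eq' (List.pairwise_of_forall_mem_list ?_)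
  simp only [List.mem_map, forall_exists_index, and_imp, forall_apply_eq_imp_iff₂]
  exact fun p hp q hq => setLike_mul_comm (conjLetter_mem t (hL p hp)) (conjLetter_mem t (hL q hq))

end ConjProd

section Sweep

variable {G : Type*} [Group G] {A : Subgroup G} [A.Normal] [IsMulCommutative A]
  {S S₀ : Set G} {t : G}

theorem conjProd_mul_zpow_mem_ball_of_heights_le (hS₀A : S₀ ⊆ A) (hS₀S : S₀ ⊆ S)
    (ht : t ∈ S ∪ S⁻¹) (M : ℕ) {L : List (ℤ × G)}
    (hL : ∀ p ∈ L, p ∈ Icc (0 : ℤ) M ×ˢ (S₀ ∪ S₀⁻¹)) :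
    conjProd t L * t ^ (M : ℤ) ∈ ball S (L.length + M) := by
  have hletter : S₀ ∪ S₀⁻¹ ⊆ S ∪ S⁻¹ := union_subset_union hS₀S (inv_subset_inv.2 hS₀S)
  induction M generalizing L with
  | zero =>
    rw [conjProd_of_forall_fst_eq_zero fun p hp => le_antisymm (hL p hp).1.2 (hL p hp).1.1]
    simpa using prod_map_snd_mem_ball fun p hp => hletter (hL p hp).2
  | succ M ih =>
    set L₀ := L.filter fun p => p.1 = 0
    set L₁ := L.filter fun p => !decide (p.1 = 0)
    have hperm : (L₀ ++ L₁).Perm L := List.filter_append_perm _ L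
    have hL₀ : ∀ p ∈ L₀, p.1 = 0 := fun p hp => by simpa using (List.mem_filter.1 hp).2
    have hL₁ : ∀ p ∈ L₁, p ∈ L ∧ p.1 ≠ 0 := fun p hp => by simpa using List.mem_filter.1 hp
    set L₁' := L₁.map fun p => (p.1 + -1, p.2)
    have hL₁' : ∀ p ∈ L₁', p ∈ Icc (0 : ℤ) M ×ˢ (S₀ ∪ S₀⁻¹) := by
      simp only [L₁', List.mem_map]
      rintro _ ⟨p, hp, rfl⟩
      obtain ⟨hpL, hne⟩ := hL₁ p hp
      obtain ⟨⟨h0, hM⟩, hx⟩ := hL p hpL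
      exact ⟨⟨by omega, by push_cast at hM; omega⟩, hx⟩
    have hsweep : conjProd t L * t ^ ((M + 1 : ℕ) : ℤ) =
        (L₀.map Prod.snd).prod * t * (conjProd t L₁' * t ^ (M : ℤ)) := by
      rw [← conjProd_eq_of_perm hperm fun p hp => mem_subgroup_of_mem_union_inv hS₀A
          (hL p (hperm.subset hp)).2, conjProd_append, conjProd_of_forall_fst_eq_zero hL₀,
        conjProd_map_shift]
      push_cast
      group
    have hlen : L₀.length + L₁'.length = L.length := by simpa [L₁'] using hperm.length_eq
    have hL₀mem : (L₀.map Prod.snd).prod ∈ ball S L₀.length :=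
      prod_map_snd_mem_ball fun p hp => hletter (hL p (List.mem_of_mem_filter hp)).2
    rw [hsweep]
    exact ball_mono S (by omega) (mul_mem_ball (mul_mem_ball hL₀mem (mem_ball_one ht)) (ih hL₁'))

theorem conjProd_mul_zpow_mem_ball_of_nonneg (hS₀A : S₀ ⊆ A) (hS₀S : S₀ ⊆ S)
    (ht : t ∈ S ∪ S⁻¹) {m M j : ℤ} (hm : m ≤ 0) (hj : 0 ≤ j) (hjM : j ≤ M)
    {L : List (ℤ × G)} (hL : ∀ p ∈ L, p ∈ Icc m M ×ˢ (S₀ ∪ S₀⁻¹)) {n : ℕ}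
    (hn : L.length + 2 * (M - m) - j ≤ n) : conjProd t L * t ^ j ∈ ball S n := by
  obtain ⟨K, hK⟩ : ∃ K : ℕ, (K : ℤ) = M - m := ⟨(M - m).toNat, by omega⟩
  set L' := L.map fun p => (p.1 + -m, p.2)
  have hL' : ∀ p ∈ L', p ∈ Icc (0 : ℤ) K ×ˢ (S₀ ∪ S₀⁻¹) := by
    simp only [L', List.mem_map]
    rintro _ ⟨p, hp, rfl⟩
    obtain ⟨⟨h₁, h₂⟩, hx⟩ := hL p hp
    exact ⟨⟨by omega, by omega⟩, hx⟩
  have heq : conjProd t L * t ^ j = t ^ m * (conjProd t L' * t ^ (K : ℤ)) * t ^ (j - M) := by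
    rw [conjProd_map_shift, hK]
    group
  rw [heq]
  refine ball_mono S ?_ (mul_mem_ball (mul_mem_ball (zpow_mem_ball ht m)
    (conjProd_mul_zpow_mem_ball_of_heights_le hS₀A hS₀S ht K hL')) (zpow_mem_ball ht (j - M)))
  simp only [L', List.length_map]
  omega

theorem conjProd_mul_zpow_mem_ball (hS₀A : S₀ ⊆ A) (hS₀S : S₀ ⊆ S)
    (ht : t ∈ S ∪ S⁻¹) {m M j : ℤ} (hm : m ≤ 0) (hM : 0 ≤ M) (hj : j ∈ Icc m M)
    {L : List (ℤ × G)} (hL : ∀ p ∈ L, p ∈ Icc m M ×ˢ (S₀ ∪ S₀⁻¹)) {n : ℕ}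
    (hn : L.length + 2 * (M - m) ≤ n) : conjProd t L * t ^ j ∈ ball S n := by
  obtain ⟨hmj, hjM⟩ := hj
  rcases le_total 0 j with hj₀ | hj₀
  · exact conjProd_mul_zpow_mem_ball_of_nonneg hS₀A hS₀S ht hm hj₀ hjM hL (by omega)
  -- for `j ≤ 0`, sweep downwards: upwards in `t⁻¹`, with heights negated
  have hL' : ∀ p ∈ L.map fun p => (-p.1, p.2), p ∈ Icc (-M) (-m) ×ˢ (S₀ ∪ S₀⁻¹) := by
    simp only [List.mem_map]
    rintro _ ⟨p, hp, rfl⟩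
    obtain ⟨⟨h₁, h₂⟩, hx⟩ := hL p hp
    exact ⟨⟨by omega, by omega⟩, hx⟩
  have := conjProd_mul_zpow_mem_ball_of_nonneg (t := t⁻¹) (j := -j)
    (L := L.map fun p => (-p.1, p.2)) (n := n) hS₀A hS₀S
    (by simpa [or_comm] using ht) (by omega) (by omega) (by omega) hL' (by simp; omega)
  simpa [conjProd_inv_map_neg] using this

end Sweep

section Decomposition

variable {G : Type*} [Group G] {S₀ : Set G} {t : G}

theorem mem_union_inv_or_eq_zpow {x : G} (hx : x ∈ (S₀ ∪ {t}) ∪ (S₀ ∪ {t})⁻¹) :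
    x ∈ S₀ ∪ S₀⁻¹ ∨ ∃ ε : ℤ, (ε = 1 ∨ ε = -1) ∧ x = t ^ ε := by
  rcases hx with (h | rfl) | (h | h)
  · exact Or.inl (Or.inl h)
  · exact Or.inr ⟨1, by simp⟩
  · exact Or.inl (Or.inr h)
  · exact Or.inr ⟨-1, Or.inr rfl, by rw [zpow_neg_one, ← inv_eq_iff_eq_inv]; exact h⟩

/-- The heights along the word form a path from `0` to `k` through `m` and `M`, which has at least
`2 (M - m) - |k|` steps. -/
theorem exists_conjProd_mul_zpow_eq_prod (l : List G)
    (hl : ∀ x ∈ l, x ∈ (S₀ ∪ {t}) ∪ (S₀ ∪ {t})⁻¹) :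
    ∃ (L : List (ℤ × G)) (m M k : ℤ), m ≤ 0 ∧ 0 ≤ M ∧ k ∈ Icc m M ∧
      (∀ p ∈ L, p ∈ Icc m M ×ˢ (S₀ ∪ S₀⁻¹)) ∧ conjProd t L * t ^ k = l.prod ∧
      L.length + 2 * (M - m) ≤ l.length + k.natAbs := by
  induction l with
  | nil => exact ⟨[], 0, 0, 0, le_rfl, le_rfl, by simp, by simp, by simp, by simp⟩
  | cons x l ih =>
    obtain ⟨L, m, M, k, hm, hM, ⟨hmk, hkM⟩, hL, hprod, hlen⟩ :=
      ih fun y hy => hl y (List.mem_cons_of_mem _ hy)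
    rcases mem_union_inv_or_eq_zpow (hl x List.mem_cons_self) with hx | ⟨ε, hε, rfl⟩
    · refine ⟨(0, x) :: L, m, M, k, hm, hM, ⟨hmk, hkM⟩, ?_, ?_, ?_⟩
      · exact List.forall_mem_cons.2 ⟨⟨⟨hm, hM⟩, hx⟩, hL⟩
      · simp [conjLetter, mul_assoc, hprod]
      · simp only [List.length_cons]
        omega
    · refine ⟨L.map fun p => (p.1 + ε, p.2), min (m + ε) 0, max (M + ε) 0, k + ε,
        by omega, by omega, ⟨by omega, by omega⟩, ?_, ?_, ?_⟩
      · simp only [List.mem_map]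
        rintro _ ⟨p, hp, rfl⟩
        obtain ⟨⟨h₁, h₂⟩, hx⟩ := hL p hp
        exact ⟨⟨by omega, by omega⟩, hx⟩
      · rw [conjProd_map_shift, List.prod_cons, ← hprod]
        group
      · simp only [List.length_map, List.length_cons]
        omega

end Decomposition

section Alphabet

variable {G : Type*} [Group G] {S₀ : Set G} {t : G}

def conjAlphabet (t : G) (S₀ : Set G) (w : ℕ) : Set G :=
  conjLetter t '' (Icc (-(w : ℤ)) w ×ˢ S₀)

theorem conjAlphabet_finite (hS₀ : S₀.Finite) (w : ℕ) : (conjAlphabet t S₀ w).Finite :=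
  ((finite_Icc _ _).prod hS₀).image _

theorem conjAlphabet_subset {A : Subgroup G} [A.Normal] (hS₀A : S₀ ⊆ A) (w : ℕ) :
    conjAlphabet t S₀ w ⊆ A := by
  rintro _ ⟨p, ⟨-, hp⟩, rfl⟩
  exact conjLetter_mem t (hS₀A hp)

theorem conjProd_mem_ball_conjAlphabet {w : ℕ} {L : List (ℤ × G)}
    (hL : ∀ p ∈ L, p ∈ Icc (-(w : ℤ)) w ×ˢ (S₀ ∪ S₀⁻¹)) :
    conjProd t L ∈ ball (conjAlphabet t S₀ w) L.length := by
  refine ⟨L.map (conjLetter t), by simp, fun y hy => ?_, rfl⟩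
  obtain ⟨p, hp, rfl⟩ := List.mem_map.1 hy
  obtain ⟨he, hx | hx⟩ := hL p hp
  · exact Or.inl ⟨p, ⟨he, hx⟩, rfl⟩
  · exact Or.inr ⟨(p.1, p.2⁻¹), ⟨he, hx⟩, (conjLetter_inv t p).symm⟩

theorem exists_conjProd_eq_of_mem_ball_conjAlphabet {w n : ℕ} {u : G}
    (hu : u ∈ ball (conjAlphabet t S₀ w) n) :
    ∃ L : List (ℤ × G), L.length ≤ n ∧ (∀ p ∈ L, p ∈ Icc (-(w : ℤ)) w ×ˢ (S₀ ∪ S₀⁻¹)) ∧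
      conjProd t L = u := by
  obtain ⟨l, hl, hlS, rfl⟩ := hu
  induction l generalizing n with
  | nil => exact ⟨[], by simp, by simp, rfl⟩
  | cons y l ih =>
    obtain ⟨L, hL, hLS, hprod⟩ := ih le_rfl fun z hz => hlS z (List.mem_cons_of_mem _ hz)
    obtain ⟨p, hp, rfl⟩ : ∃ p ∈ Icc (-(w : ℤ)) w ×ˢ (S₀ ∪ S₀⁻¹), conjLetter t p = y := by
      rcases hlS y List.mem_cons_self with ⟨p, ⟨he, hx⟩, rfl⟩ | ⟨p, ⟨he, hx⟩, hp⟩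
      · exact ⟨p, ⟨he, Or.inl hx⟩, rfl⟩
      · exact ⟨(p.1, p.2⁻¹), ⟨he, Or.inr (by simpa using hx)⟩,
          by rw [← conjLetter_inv, hp, inv_inv]⟩
    refine ⟨p :: L, ?_, List.forall_mem_cons.2 ⟨hp, hLS⟩, by simp [hprod]⟩
    simp only [List.length_cons] at hl ⊢
    omega

end Alphabet

section Dichotomy

variable {G : Type*} [Group G] {A : Subgroup G} [A.Normal] [IsMulCommutative A]
  {S₀ : Set G} {t : G}

theorem mem_ball_conjAlphabet_or_exists_mul_zpow_mem_ball (hS₀A : S₀ ⊆ A)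
    (htA : ∀ k : ℤ, t ^ k ∈ A → k = 0) (w : ℕ) {n : ℕ} {g : G} (hgA : g ∈ A)
    (hg : g ∈ ball (S₀ ∪ {t}) n) :
    g ∈ ball (conjAlphabet t S₀ w) n ∨
      ∃ a : ℤ, ∀ i ≤ w, g * t ^ (a + i) ∈ ball (S₀ ∪ {t}) n := by
  obtain ⟨l, hl, hlS, rfl⟩ := hg
  obtain ⟨L, m, M, k, hm, hM, hk, hL, hprod, hlen⟩ := exists_conjProd_mul_zpow_eq_prod l hlS
  have hLA : conjProd t L ∈ A :=
    conjProd_mem t fun p hp => mem_subgroup_of_mem_union_inv hS₀A (hL p hp).2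
  have htk : t ^ k = (conjProd t L)⁻¹ * l.prod := by
    rw [← hprod]
    group
  obtain rfl : k = 0 := htA k (htk ▸ A.mul_mem (A.inv_mem hLA) hgA)
  rw [← hprod, zpow_zero, mul_one]
  by_cases hwide : (w : ℤ) ≤ M - m
  · right
    refine ⟨m, fun i hi => conjProd_mul_zpow_mem_ball (j := m + i) hS₀A subset_union_left
      (Or.inl (mem_union_right _ (mem_singleton t))) hm hM ⟨by omega, by omega⟩ hL ?_⟩
    simp only [Int.natAbs_zero, Nat.cast_zero, add_zero] at hlen
    omega
  · left
    refine ball_mono _ (by omega) (conjProd_mem_ball_conjAlphabet fun p hp => ?_)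
    obtain ⟨⟨h₁, h₂⟩, hx⟩ := hL p hp
    exact ⟨⟨by omega, by omega⟩, hx⟩

theorem mul_zpow_mem_ball_of_mem_ball_conjAlphabet (hS₀A : S₀ ⊆ A) {w q n : ℕ} {u : G}
    (hu : u ∈ ball (conjAlphabet t S₀ w) q) {i : ℕ} (hi : q + 4 * w + i ≤ n) :
    u * t ^ (i : ℤ) ∈ ball (S₀ ∪ {t}) n := by
  obtain ⟨L, hLq, hL, rfl⟩ := exists_conjProd_eq_of_mem_ball_conjAlphabet hu
  refine conjProd_mul_zpow_mem_ball_of_nonneg hS₀A subset_union_left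
    (Or.inl (mem_union_right _ (mem_singleton t))) (m := -w) (M := w + i) (by omega)
    (by omega) (by omega) (fun p hp => ?_) (by omega)
  obtain ⟨⟨h₁, h₂⟩, hx⟩ := hL p hp
  exact ⟨⟨h₁, by omega⟩, hx⟩

end Dichotomy

section Halving

variable {H : Type*} [CommGroup H] {S : Set H}

theorem prod_pow_mem_ball {s : Finset H} (hs : ∀ x ∈ s, x ∈ S ∪ S⁻¹) (k : H → ℕ) :
    ∏ x ∈ s, x ^ k x ∈ ball S (∑ x ∈ s, k x) := by
  classical
  induction s using Finset.induction_on with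
  | empty => simp [one_mem_ball]
  | insert a s ha ih =>
    rw [Finset.prod_insert ha, Finset.sum_insert ha]
    exact mul_mem_ball (npow_mem_ball (hs a (Finset.mem_insert_self a s)) _)
      (ih fun x hx => hs x (Finset.mem_insert_of_mem hx))

/-- Split the multiplicity of each letter of a word as `2 q + r` with `r ≤ 1`. -/
theorem ball_subset_image2_sq_mul (hS : S.Finite) (n : ℕ) :
    ball S n ⊆ image2 (fun u c => u ^ 2 * c) (ball S (n / 2)) (ball S (S ∪ S⁻¹).ncard) := by
  classical
  rintro _ ⟨l, hl, hlS, rfl⟩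
  have hlS' : ∀ x ∈ l.toFinset, x ∈ S ∪ S⁻¹ := fun x hx => hlS x (List.mem_toFinset.1 hx)
  have hsum : ∑ x ∈ l.toFinset, l.count x = l.length := by simp
  refine ⟨_, ball_mono S ?_ (prod_pow_mem_ball hlS' fun x => l.count x / 2),
    _, ball_mono S ?_ (prod_pow_mem_ball hlS' fun x => l.count x % 2), ?_⟩
  · rw [Nat.le_div_iff_mul_le two_pos, Finset.sum_mul]
    calc ∑ x ∈ l.toFinset, l.count x / 2 * 2 ≤ ∑ x ∈ l.toFinset, l.count x :=
          Finset.sum_le_sum fun x _ => Nat.div_mul_le_self _ _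
      _ ≤ n := hsum ▸ hl
  · calc ∑ x ∈ l.toFinset, l.count x % 2 ≤ ∑ _x ∈ l.toFinset, 1 :=
          Finset.sum_le_sum fun x _ => Nat.le_of_lt_succ (Nat.mod_lt _ two_pos)
      _ = (l.toFinset : Set H).ncard := by rw [ncard_coe_finset, Finset.card_eq_sum_ones]
      _ ≤ (S ∪ S⁻¹).ncard := ncard_le_ncard hlS' (hS.union hS.inv)
  · simp only [← Finset.prod_pow, ← Finset.prod_mul_distrib, ← pow_mul, ← pow_add]
    rw [Finset.prod_list_count]
    exact Finset.prod_congr rfl fun x _ => by rw [Nat.div_add_mod']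

theorem exists_ncard_ball_le_mul_ncard_ball_half (hS : S.Finite) :
    ∃ C : ℕ, ∀ n, (ball S n).ncard ≤ C * (ball S (n / 2)).ncard := by
  refine ⟨(ball S (S ∪ S⁻¹).ncard).ncard, fun n => ?_⟩
  have hfin := ball_finite hS
  calc (ball S n).ncard
      ≤ (image2 (fun u c => u ^ 2 * c) (ball S (n / 2)) (ball S (S ∪ S⁻¹).ncard)).ncard :=
        ncard_le_ncard (ball_subset_image2_sq_mul hS n) ((hfin _).image2 _ (hfin _))
    _ ≤ (ball S (n / 2) ×ˢ ball S (S ∪ S⁻¹).ncard).ncard := by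
        rw [← image_uncurry_prod]
        exact ncard_image_le ((hfin _).prod (hfin _))
    _ = _ := by rw [ncard_prod, mul_comm]

end Halving

open scoped IsMulCommutative in
theorem exists_ncard_ball_le_mul_ncard_ball_half_of_subset {G : Type*} [Group G]
    {A : Subgroup G} [IsMulCommutative A] {S : Set G} (hS : S.Finite) (hSA : S ⊆ A) :
    ∃ C : ℕ, ∀ n, (ball S n).ncard ≤ C * (ball S (n / 2)).ncard := by
  have hS' : A.subtype '' (A.subtype ⁻¹' S) = S :=
    Set.image_preimage_eq_of_subset (by simpa using hSA)
  obtain ⟨C, hC⟩ :=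
    exists_ncard_ball_le_mul_ncard_ball_half (hS.preimage A.subtype_injective.injOn)
  refine ⟨C, fun n => ?_⟩
  rw [← hS', ← image_ball, ← image_ball, Set.ncard_image_of_injective _ A.subtype_injective,
    Set.ncard_image_of_injective _ A.subtype_injective]
  exact hC n

section Counting

variable {G : Type*} [Group G] {A : Subgroup G} {t : G}

theorem eq_and_eq_of_mul_zpow_eq_mul_zpow (htA : ∀ k : ℤ, t ^ k ∈ A → k = 0) {g g' : G}
    (hg : g ∈ A) (hg' : g' ∈ A) {a b : ℤ} (h : g * t ^ a = g' * t ^ b) : g = g' ∧ a = b := by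
  have hba : t ^ (b - a) = g'⁻¹ * g :=
    calc t ^ (b - a) = g'⁻¹ * (g' * t ^ b) * t ^ (-a) := by group
      _ = g'⁻¹ * (g * t ^ a) * t ^ (-a) := by rw [h]
      _ = g'⁻¹ * g := by group
  obtain rfl : a = b := by
    have := htA (b - a) (hba ▸ A.mul_mem (A.inv_mem hg') hg)
    omega
  exact ⟨mul_right_cancel h, rfl⟩

theorem ncard_mul_succ_le_of_mul_zpow_mem (htA : ∀ k : ℤ, t ^ k ∈ A → k = 0) {X B : Set G}
    (hXA : X ⊆ A) (hB : B.Finite) (k : ℕ)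
    (h : ∀ g ∈ X, ∃ a : ℤ, ∀ i ≤ k, g * t ^ (a + i) ∈ B) : X.ncard * (k + 1) ≤ B.ncard := by
  choose! a ha using h
  have hinj : InjOn (fun p : G × ℕ => p.1 * t ^ (a p.1 + p.2)) (X ×ˢ Iic k) := by
    rintro ⟨g, i⟩ ⟨hg, -⟩ ⟨g', i'⟩ ⟨hg', -⟩ hgg'
    obtain ⟨rfl, hi⟩ := eq_and_eq_of_mul_zpow_eq_mul_zpow htA (hXA hg) (hXA hg') hgg'
    simp only [Prod.mk.injEq, true_and] at hi ⊢
    omega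
  calc X.ncard * (k + 1) = (X ×ˢ Iic k).ncard := by
        simp [ncard_prod, ncard_eq_toFinset_card']
    _ ≤ B.ncard := ncard_le_ncard_of_injOn _ (fun p hp => ha p.1 hp.1 p.2 hp.2) hinj hB

end Counting

section Density

variable {G : Type*} [Group G]

/-- `dens_S(X)` is the `limsup` of `ballDensity X S`. -/
noncomputable def ballDensity (X S : Set G) (n : ℕ) : ℝ :=
  ((X ∩ ball S n).ncard : ℝ) / (ball S n).ncard

variable {A : Subgroup G} [A.Normal] [IsMulCommutative A] {S₀ : Set G} {t : G}

theorem ballDensity_le (hS₀ : S₀.Finite) (hS₀A : S₀ ⊆ A) (htA : ∀ k : ℤ, t ^ k ∈ A → k = 0)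
    (w : ℕ) : ∃ C : ℕ, ∀ J n : ℕ, n / 2 + 4 * w + J ≤ n →
      ballDensity A (S₀ ∪ {t}) n ≤ 1 / (w + 1) + C / (J + 1) := by
  set S := S₀ ∪ {t}
  set P := ball (conjAlphabet t S₀ w)
  obtain ⟨C, hC⟩ := exists_ncard_ball_le_mul_ncard_ball_half_of_subset
    (conjAlphabet_finite hS₀ w) (conjAlphabet_subset hS₀A w)
  refine ⟨C, fun J n hn => ?_⟩
  have hB : (ball S n).Finite := ball_finite (hS₀.union (finite_singleton t)) n
  set X := ((A : Set G) ∩ ball S n) \ P n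
  have hX : X.ncard * (w + 1) ≤ (ball S n).ncard :=
    ncard_mul_succ_le_of_mul_zpow_mem htA (fun g hg => hg.1.1) hB w
      fun g ⟨⟨hgA, hgB⟩, hgP⟩ =>
        (mem_ball_conjAlphabet_or_exists_mul_zpow_mem_ball hS₀A htA w hgA hgB).resolve_left hgP
  have hP : (P (n / 2)).ncard * (J + 1) ≤ (ball S n).ncard :=
    ncard_mul_succ_le_of_mul_zpow_mem htA (ball_subset_subgroup (conjAlphabet_subset hS₀A w) _)
      hB J fun u hu => ⟨0, fun i hi => by
        rw [zero_add]
        exact mul_zpow_mem_ball_of_mem_ball_conjAlphabet hS₀A hu (by omega)⟩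
  have hsplit : ((A : Set G) ∩ ball S n).ncard ≤ X.ncard + (P n).ncard :=
    (ncard_le_ncard (subset_sdiff_union _ _)
      ((hB.inter_of_right _).sdiff.union (ball_finite (conjAlphabet_finite hS₀ w) n))).trans
        (ncard_union_le _ _)
  have hBpos : (0 : ℝ) < (ball S n).ncard := by
    exact_mod_cast (ncard_pos hB).2 ⟨1, one_mem_ball S n⟩
  have hX' : (X.ncard : ℝ) ≤ (ball S n).ncard / (w + 1) := by
    rw [le_div_iff₀ (by positivity)]
    exact_mod_cast hX
  have hP' : ((P (n / 2)).ncard : ℝ) ≤ (ball S n).ncard / (J + 1) := by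
    rw [le_div_iff₀ (by positivity)]
    exact_mod_cast hP
  rw [ballDensity, div_le_iff₀ hBpos]
  calc (((A : Set G) ∩ ball S n).ncard : ℝ) ≤ X.ncard + C * (P (n / 2)).ncard := by
        exact_mod_cast hsplit.trans (Nat.add_le_add_left (hC n) _)
    _ ≤ (ball S n).ncard / (w + 1) + C * ((ball S n).ncard / (J + 1)) := by gcongr
    _ = (1 / (w + 1) + C / (J + 1)) * (ball S n).ncard := by ring

end Density

theorem tendsto_zero_of_forall_exists_le {f : ℕ → ℝ} (hf : ∀ n, 0 ≤ f n)
    (h : ∀ w : ℕ, ∃ C : ℝ, ∀ J : ℕ, ∀ᶠ n in atTop, f n ≤ 1 / (w + 1) + C / (J + 1)) :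
    Tendsto f atTop (nhds 0) := by
  refine tendsto_order.2 ⟨fun ε hε => Eventually.of_forall fun n => hε.trans_le (hf n),
    fun ε hε => ?_⟩
  obtain ⟨w, hw⟩ := exists_nat_one_div_lt (half_pos hε)
  obtain ⟨C, hC⟩ := h w
  obtain ⟨J, hJ⟩ := exists_nat_gt (2 * C / ε)
  have hCJ : C / (J + 1) < ε / 2 := by
    rw [div_lt_iff₀ (by positivity)]
    rw [div_lt_iff₀ hε] at hJ
    nlinarith
  filter_upwards [hC J] with n hn
  linarith

theorem stmt18_general {G : Type*} [Group G] (A : Subgroup G) (hAnorm : A.Normal)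
    (hAab : ∀ a ∈ A, ∀ b ∈ A, a * b = b * a)
    (t : G) (ht : ∀ n : ℤ, n ≠ 0 → t ^ n ≠ 1)
    (hdisj : A ⊓ Subgroup.zpowers t = ⊥)
    (S0 : Finset G) (hS0 : (S0 : Set G) ⊆ (A : Set G)) :
    limsup (fun n : ℕ =>
      (((A : Set G) ∩ ball ((S0 : Set G) ∪ {t}) n).ncard : ℝ) /
        ((ball ((S0 : Set G) ∪ {t}) n).ncard : ℝ))
      atTop = 0 := by
  have : IsMulCommutative A := ⟨⟨fun a b => Subtype.ext (hAab _ a.2 _ b.2)⟩⟩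
  have htA (k : ℤ) (hk : t ^ k ∈ A) : k = 0 := by
    by_contra hk₀
    exact ht k hk₀ (by simpa [hdisj] using Subgroup.mem_inf.2 ⟨hk, Subgroup.zpow_mem_zpowers t k⟩)
  refine Tendsto.limsup_eq (tendsto_zero_of_forall_exists_le (fun n => by positivity) fun w => ?_)
  obtain ⟨C, hC⟩ := ballDensity_le S0.finite_toSet hS0 htA w
  exact ⟨C, fun J => eventually_atTop.2 ⟨8 * w + 2 * J, fun n hn => hC J n (by omega)⟩⟩

/-- Let `G = A ⋊ ⟨t⟩` be finitely generated with `A` abelian and `⟨t⟩ ≅ ℤ`.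
Then `A` has density `dens_S(A) = 0` in `G` with respect to any finite
generating set of the form `S = S₀ ∪ {t}` with `S₀ ⊆ A`. -/
theorem stmt18 {G : Type*} [Group G] (A : Subgroup G) (hAnorm : A.Normal)
    (hAab : ∀ a ∈ A, ∀ b ∈ A, a * b = b * a)
    (t : G) (ht : ∀ n : ℤ, n ≠ 0 → t ^ n ≠ 1)
    (hsplit : ∀ g : G, ∃ a ∈ A, ∃ k : ℤ, g = a * t ^ k)
    (hdisj : A ⊓ Subgroup.zpowers t = ⊥)
    (S0 : Finset G) (hS0 : (S0 : Set G) ⊆ (A : Set G))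
    (hgen : Subgroup.closure ((S0 : Set G) ∪ {t}) = ⊤) :
    limsup (fun n : ℕ =>
      (((A : Set G) ∩ ball ((S0 : Set G) ∪ {t}) n).ncard : ℝ) /
        ((ball ((S0 : Set G) ∪ {t}) n).ncard : ℝ))
      atTop = 0 :=
  stmt18_general A hAnorm hAab t ht hdisj S0 hS0
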